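/- Let α be a unit of O, let t > m ≥ 0 be integers, and let (F_n)_{n≥0} be a sequence of polynomials in O[T] with deg F_n < p^n for every n (so F_0 is a constant). Assume F_n − α·ν_n·F_{n-1} ∈ ϖ^t·O[T] for all n ≥ 1, and that ord_ϖ(F_0) = m. Then for every n ≥ 0: F_n ≠ 0, μ(F_n) = m, and λ(F_n) = p^n − 1. -/

import Mathlib

open Polynomial

/-- The axioms of the normalized additive valuation `ord_ϖ : K → ℤ` of a discrete
valuation ring `O` with uniformizer `ϖ` and fraction field `K`, recorded on the
nonzero elements of `K`: multiplicativity and the ultrametric inequality. -/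
def IsOrd {K : Type*} [Field K] (v : K → ℤ) : Prop :=
  (∀ x y : K, x ≠ 0 → y ≠ 0 → v (x * y) = v x + v y) ∧
  (∀ x y : K, x ≠ 0 → y ≠ 0 → x + y ≠ 0 → min (v x) (v y) ≤ v (x + y))

/-- The μ-invariant of a (nonzero) polynomial `F = Σ aᵢ Tⁱ` over `K`:
`μ(F) = minᵢ ord_ϖ(aᵢ)`. -/
noncomputable def muInv {K : Type*} [Field K] (v : K → ℤ) (F : Polynomial K) : ℤ :=
  sInf {m : ℤ | ∃ i, F.coeff i ≠ 0 ∧ v (F.coeff i) = m}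

/-- The λ-invariant of a (nonzero) polynomial over `K`:
`λ(F) = min { i : ord_ϖ(aᵢ) = μ(F) }`. -/
noncomputable def lamInv {K : Type*} [Field K] (v : K → ℤ) (F : Polynomial K) : ℕ :=
  sInf {i : ℕ | F.coeff i ≠ 0 ∧ v (F.coeff i) = muInv v F}

/-- `F ∈ O[T]`: all coefficients lie in the valuation ring, i.e. have valuation `≥ 0`. -/
def IntegralPoly {K : Type*} [Field K] (v : K → ℤ) (F : Polynomial K) : Prop :=
  ∀ i, F.coeff i ≠ 0 → 0 ≤ v (F.coeff i)

/-- The residue field `O/(ϖ)` has characteristic `p`, i.e. `p` lies in the maximal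
ideal `(ϖ)` of `O` (equivalently `ord_ϖ(p) ≥ 1`, or `p = 0` in `K`). -/
def ResidueCharP {K : Type*} [Field K] (v : K → ℤ) (p : ℕ) : Prop :=
  (p : K) = 0 ∨ 1 ≤ v (p : K)

/-- `ν_n(T) = Σ_{k=0}^{p-1} (1+T)^{k·p^(n-1)}`, the polynomial representing the
corestriction map `cor_{n-1}^n : K[G_{n-1}] → K[G_n]`. -/
noncomputable def nuPoly (K : Type*) [Field K] (p n : ℕ) : Polynomial K :=
  ∑ k ∈ Finset.range p, (1 + Polynomial.X) ^ (k * p ^ (n - 1))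

section Helpers
variable {K : Type*} [Field K] {v : K → ℤ}

lemma v_one (hv : IsOrd v) : v (1 : K) = 0 := by
  have h := hv.1 1 1 one_ne_zero one_ne_zero
  rw [mul_one] at h; linarith

lemma v_neg_one (hv : IsOrd v) : v (-1 : K) = 0 := by
  have h := hv.1 (-1) (-1) (by norm_num) (by norm_num)
  rw [neg_mul_neg, one_mul, v_one hv] at h; linarith

lemma v_neg (hv : IsOrd v) {x : K} (hx : x ≠ 0) : v (-x) = v x := by
  have h := hv.1 (-1) x (by norm_num) hx
  rw [neg_one_mul] at h
  rw [h, v_neg_one hv]; ring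

lemma vadd' (hv : IsOrd v) {c : ℤ} {x y : K} (hx : x ≠ 0 → c ≤ v x)
    (hy : y ≠ 0 → c ≤ v y) (hxy : x + y ≠ 0) : c ≤ v (x + y) := by
  by_cases h0 : x = 0
  · simpa [h0] using hy (by simpa [h0] using hxy)
  by_cases h1 : y = 0
  · simpa [h1] using hx (by simpa [h1] using hxy)
  exact le_trans (le_min (hx h0) (hy h1)) (hv.2 x y h0 h1 hxy)

lemma v_sum (hv : IsOrd v) {c : ℤ} {ι : Type*} (s : Finset ι) (f : ι → K)
    (h : ∀ i ∈ s, f i ≠ 0 → c ≤ v (f i)) (hs : (∑ i ∈ s, f i) ≠ 0) :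
    c ≤ v (∑ i ∈ s, f i) := by
  classical
  induction s using Finset.induction_on with
  | empty => simp at hs
  | @insert a s' hnotmem ih =>
    rw [Finset.sum_insert hnotmem] at hs ⊢
    exact vadd' hv (h a (Finset.mem_insert_self a s'))
      (fun hne => ih (fun i hi => h i (Finset.mem_insert_of_mem hi)) hne) hs

lemma v_natCast (hv : IsOrd v) (d : ℕ) (hd : (d : K) ≠ 0) : 0 ≤ v (d : K) := by
  induction d with
  | zero => simp at hd
  | succ n ih =>
    push_cast at hd ⊢
    exact vadd' hv ih (fun _ => le_of_eq (v_one hv).symm) hd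

lemma v_add_eq (hv : IsOrd v) {x y : K} (hx : x ≠ 0) (hy' : y ≠ 0 → v x < v y) :
    x + y ≠ 0 ∧ v (x + y) = v x := by
  by_cases hy : y = 0
  · simp [hy, hx]
  have hlt := hy' hy
  have hne : x + y ≠ 0 := by
    intro h
    have hyx : y = -x := by linear_combination h
    rw [hyx, v_neg hv hx] at hlt; exact lt_irrefl _ hlt
  refine ⟨hne, le_antisymm ?_ ?_⟩
  · have h := hv.2 (x + y) (-y) hne (neg_ne_zero.2 hy) (by simpa using hx)
    rw [add_neg_cancel_right, v_neg hv hy] at h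
    rcases min_cases (v (x + y)) (v y) with ⟨h1, _⟩ | ⟨h1, h2⟩ <;> linarith
  · have h := hv.2 x y hx hy hne
    rcases min_cases (v x) (v y) with ⟨h1, _⟩ | ⟨h1, h2⟩ <;> linarith

lemma mu_lam (hv : IsOrd v) (F : Polynomial K) (m : ℤ) (l : ℕ)
    (h1 : ∀ i, F.coeff i ≠ 0 → m ≤ v (F.coeff i))
    (h2 : F.coeff l ≠ 0) (h3 : v (F.coeff l) = m)
    (h4 : ∀ i, i < l → F.coeff i ≠ 0 → m < v (F.coeff i)) :
    muInv v F = m ∧ lamInv v F = l := by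
  have hbdd : BddBelow {m : ℤ | ∃ i, F.coeff i ≠ 0 ∧ v (F.coeff i) = m} := by
    refine ⟨m, ?_⟩
    rintro b ⟨i, hi, rfl⟩
    exact h1 i hi
  have hmu : muInv v F = m := by
    apply le_antisymm
    · exact csInf_le hbdd ⟨l, h2, h3⟩
    · have hne : Set.Nonempty {m : ℤ | ∃ i, F.coeff i ≠ 0 ∧ v (F.coeff i) = m} :=
        ⟨m, l, h2, h3⟩
      apply le_csInf hne
      rintro b ⟨i, hi, rfl⟩
      exact h1 i hi
  refine ⟨hmu, ?_⟩
  unfold lamInv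
  rw [hmu]
  apply le_antisymm
  · exact Nat.sInf_le ⟨h2, h3⟩
  · have hne : Set.Nonempty {i : ℕ | F.coeff i ≠ 0 ∧ v (F.coeff i) = m} := ⟨l, h2, h3⟩
    apply le_csInf hne
    rintro i ⟨hi, hvi⟩
    by_contra hil
    push_neg at hil
    exact absurd hvi (ne_of_gt (h4 i hil hi))

end Helpers

def cNu (p n j : ℕ) : ℕ := ∑ k ∈ Finset.range p, (k * p ^ (n - 1)).choose j

lemma nu_coeff (K : Type*) [Field K] (p n j : ℕ) :
    (nuPoly K p n).coeff j = (cNu p n j : K) := by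
  unfold nuPoly cNu
  rw [Polynomial.finset_sum_coeff]
  push_cast
  exact Finset.sum_congr rfl fun k _ => Polynomial.coeff_one_add_X_pow K _ j

lemma cNu_top {p : ℕ} (hp : p.Prime) (n : ℕ) :
    cNu p n ((p - 1) * p ^ (n - 1)) = 1 := by
  unfold cNu
  rw [Finset.sum_eq_single_of_mem (p - 1)
    (Finset.mem_range.2 (by have := hp.two_le; omega))]
  · exact Nat.choose_self _
  · intro k hk hne
    apply Nat.choose_eq_zero_of_lt
    have hq : 0 < p ^ (n - 1) := Nat.pow_pos hp.pos
    have : k < p - 1 := by have := Finset.mem_range.1 hk; omega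
    exact (Nat.mul_lt_mul_right hq).2 this

lemma cNu_high {p : ℕ} (_hp : p.Prime) (n j : ℕ) (hj : (p - 1) * p ^ (n - 1) < j) :
    cNu p n j = 0 := by
  unfold cNu
  apply Finset.sum_eq_zero
  intro k hk
  apply Nat.choose_eq_zero_of_lt
  calc k * p ^ (n - 1) ≤ (p - 1) * p ^ (n - 1) := by
        apply Nat.mul_le_mul_right
        have := Finset.mem_range.1 hk; omega
    _ < j := hj

lemma nuPoly_zmod {p : ℕ} [hpf : Fact p.Prime] (n : ℕ) :
    nuPoly (ZMod p) p n = Polynomial.X ^ ((p - 1) * p ^ (n - 1)) := by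
  have hp := hpf.out
  set q := p ^ (n - 1) with hq
  have hXq : (X : Polynomial (ZMod p)) ^ q ≠ 0 := pow_ne_zero _ Polynomial.X_ne_zero
  apply mul_right_cancel₀ hXq
  have h1 : nuPoly (ZMod p) p n = ∑ k ∈ Finset.range p, (1 + X ^ q) ^ k := by
    unfold nuPoly
    apply Finset.sum_congr rfl
    intro k _
    rw [mul_comm k q, pow_mul]
    congr 1
    have h := add_pow_char_pow (R := Polynomial (ZMod p)) (p := p) (n := n - 1)
      (x := 1) (y := X)
    simpa [hq] using h
  rw [h1]
  have h2 : (∑ k ∈ Finset.range p, ((1 : Polynomial (ZMod p)) + X ^ q) ^ k) * ((1 + X ^ q) - 1)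
      = (1 + X ^ q) ^ p - 1 := geom_sum_mul _ _
  have h3 : ((1 : Polynomial (ZMod p)) + X ^ q) ^ p = 1 + (X ^ q) ^ p :=
    by simpa using add_pow_char (R := Polynomial (ZMod p)) (x := 1) (y := X ^ q) p
  rw [add_sub_cancel_left] at h2
  rw [h2, h3, add_sub_cancel_left]
  have hpq : (p - 1) * q + q = q * p := by
    calc (p - 1) * q + q = ((p - 1) + 1) * q := (Nat.succ_mul _ _).symm
      _ = p * q := by have hppos := hp.pos; congr 1; omega
      _ = q * p := Nat.mul_comm _ _
  rw [← pow_add, hpq, pow_mul]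

lemma cNu_mid {p : ℕ} (hp : p.Prime) (n j : ℕ) (hj : j ≠ (p - 1) * p ^ (n - 1)) :
    p ∣ cNu p n j := by
  haveI : Fact p.Prime := ⟨hp⟩
  have h := congrArg (fun P : Polynomial (ZMod p) => P.coeff j) (nuPoly_zmod n)
  rw [nu_coeff, Polynomial.coeff_X_pow, if_neg hj] at h
  exact (ZMod.natCast_eq_zero_iff _ _).1 h


/-- Abstract core of Proposition 5.1: the congruence of a sequence of integral
elements with corestrictions of a constant of valuation m < t forces μ = m and
maximal λ-invariants at every level. -/
theorem congruence_implies_maximal_lambda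
    {K : Type*} [Field K] (p : ℕ) (hp : p.Prime)
    (v : K → ℤ) (hv : IsOrd v) (hres : ResidueCharP v p)
    (α : K) (hα0 : α ≠ 0) (hα : v α = 0)
    (t m : ℕ) (htm : m < t)
    (F : ℕ → Polynomial K)
    (hFint : ∀ n, IntegralPoly v (F n))
    (hdeg : ∀ n, (F n).degree < (p ^ n : ℕ))
    -- Fₙ − α·νₙ·Fₙ₋₁ ∈ ϖ^t·O[T] for all n ≥ 1
    (hcong : ∀ n, 1 ≤ n → ∀ i,
      (F n - Polynomial.C α * nuPoly K p n * F (n - 1)).coeff i ≠ 0 →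
      (t : ℤ) ≤ v ((F n - Polynomial.C α * nuPoly K p n * F (n - 1)).coeff i))
    -- ord_ϖ(F₀) = m (F₀ is a constant since deg F₀ < p^0 = 1)
    (hF0 : (F 0).coeff 0 ≠ 0) (hm : v ((F 0).coeff 0) = m) :
    ∀ n, F n ≠ 0 ∧ muInv v (F n) = m ∧ lamInv v (F n) = p ^ n - 1 := by
  have hp2 := hp.two_le
  suffices Q : ∀ n, (∀ i, (F n).coeff i ≠ 0 → (m : ℤ) ≤ v ((F n).coeff i)) ∧
      ((F n).coeff (p ^ n - 1) ≠ 0 ∧ v ((F n).coeff (p ^ n - 1)) = m) ∧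
      (∀ i, i < p ^ n - 1 → (F n).coeff i ≠ 0 → (m : ℤ) + 1 ≤ v ((F n).coeff i)) by
    intro n
    obtain ⟨h1, ⟨h2, h3⟩, h4⟩ := Q n
    have hF : F n ≠ 0 := fun h => h2 (by simp [h])
    have hml := mu_lam hv (F n) m (p ^ n - 1) h1 h2 h3
      (fun i hi hne => by have := h4 i hi hne; linarith)
    exact ⟨hF, hml.1, hml.2⟩
  intro n
  induction n with
  | zero =>
    have hcz : ∀ i, 1 ≤ i → (F 0).coeff i = 0 := by
      intro i hi
      apply Polynomial.coeff_eq_zero_of_degree_lt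
      have hd := hdeg 0
      calc (F 0).degree < ((p ^ 0 : ℕ) : WithBot ℕ) := hd
        _ = ((1 : ℕ) : WithBot ℕ) := by norm_num
        _ ≤ (i : WithBot ℕ) := by exact_mod_cast hi
    refine ⟨?_, ⟨by simpa using hF0, by simpa using hm⟩, ?_⟩
    · intro i hi
      rcases Nat.eq_zero_or_pos i with rfl | hi1
      · exact le_of_eq hm.symm
      · exact absurd (hcz i hi1) hi
    · intro i hi
      simp at hi
  | succ n ih =>
    obtain ⟨ih1, ⟨ih2, ih3⟩, ih4⟩ := ih
    set q := p ^ n with hqdef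
    set N := (p - 1) * q with hNdef
    have hq1 : 1 ≤ q := Nat.one_le_pow _ _ hp.pos
    have hNq : N + q = p ^ (n + 1) := by
      calc N + q = ((p - 1) + 1) * q := (Nat.succ_mul _ _).symm
        _ = p * q := by congr 1; omega
        _ = p ^ (n + 1) := (pow_succ' p n).symm
    set ν := nuPoly K p (n + 1) with hν
    have hνcoeff : ∀ j, ν.coeff j = (cNu p (n + 1) j : K) := fun j => nu_coeff K p (n + 1) j
    have hνint : ∀ j, ν.coeff j ≠ 0 → 0 ≤ v (ν.coeff j) := by
      intro j hj
      rw [hνcoeff] at hj ⊢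
      exact v_natCast hv _ hj
    have hνtop : ν.coeff N = 1 := by
      rw [hνcoeff]
      have : cNu p (n + 1) N = 1 := cNu_top hp (n + 1)
      rw [this]; norm_num
    have hνhigh : ∀ j, N < j → ν.coeff j = 0 := by
      intro j hj
      rw [hνcoeff]
      have : cNu p (n + 1) j = 0 := cNu_high hp (n + 1) j hj
      rw [this]; norm_num
    have hνmid : ∀ j, j ≠ N → ν.coeff j ≠ 0 → 1 ≤ v (ν.coeff j) := by
      intro j hjN hj0
      obtain ⟨d, hd⟩ := cNu_mid hp (n + 1) j hjN
      rw [hνcoeff, hd] at hj0 ⊢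
      push_cast at hj0 ⊢
      have hp0 : (p : K) ≠ 0 := fun h => hj0 (by rw [h, zero_mul])
      have hd0 : (d : K) ≠ 0 := fun h => hj0 (by rw [h, mul_zero])
      rw [hv.1 _ _ hp0 hd0]
      have h1 : 1 ≤ v (p : K) := hres.resolve_left hp0
      have h2 : 0 ≤ v (d : K) := v_natCast hv d hd0
      linarith
    have hFdeg : ∀ k, q ≤ k → (F n).coeff k = 0 := by
      intro k hk
      apply Polynomial.coeff_eq_zero_of_degree_lt
      calc (F n).degree < ((q : ℕ) : WithBot ℕ) := hdeg n
        _ ≤ (k : WithBot ℕ) := by exact_mod_cast hk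
    have hcoeffdec : ∀ i, (F (n + 1)).coeff i =
        (C α * ν * F n).coeff i + (F (n + 1) - C α * ν * F n).coeff i := by
      intro i; simp
    have hHv : ∀ i, (F (n + 1) - C α * ν * F n).coeff i ≠ 0 →
        (t : ℤ) ≤ v ((F (n + 1) - C α * ν * F n).coeff i) := by
      intro i
      have h := hcong (n + 1) (by omega) i
      simpa using h
    have hGcoeff : ∀ i, (C α * ν * F n).coeff i =
        α * ∑ x ∈ Finset.HasAntidiagonal.antidiagonal i, ν.coeff x.1 * (F n).coeff x.2 := by
      intro i
      rw [mul_assoc, Polynomial.coeff_C_mul, Polynomial.coeff_mul]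
    have hGa : ∀ i, (C α * ν * F n).coeff i ≠ 0 →
        (m : ℤ) ≤ v ((C α * ν * F n).coeff i) := by
      intro i hne
      rw [hGcoeff] at hne ⊢
      have hS : (∑ x ∈ Finset.HasAntidiagonal.antidiagonal i, ν.coeff x.1 * (F n).coeff x.2) ≠ 0 :=
        fun h => hne (by rw [h, mul_zero])
      rw [hv.1 _ _ hα0 hS, hα, zero_add]
      apply v_sum hv _ _ _ hS
      intro x _ hx0
      have hν0 : ν.coeff x.1 ≠ 0 := left_ne_zero_of_mul hx0
      have hf0 : (F n).coeff x.2 ≠ 0 := right_ne_zero_of_mul hx0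
      rw [hv.1 _ _ hν0 hf0]
      have ha := hνint x.1 hν0
      have hb := ih1 x.2 hf0
      linarith
    have hGc : ∀ i, i < p ^ (n + 1) - 1 → (C α * ν * F n).coeff i ≠ 0 →
        (m : ℤ) + 1 ≤ v ((C α * ν * F n).coeff i) := by
      intro i hi hne
      rw [hGcoeff] at hne ⊢
      have hS : (∑ x ∈ Finset.HasAntidiagonal.antidiagonal i, ν.coeff x.1 * (F n).coeff x.2) ≠ 0 :=
        fun h => hne (by rw [h, mul_zero])
      rw [hv.1 _ _ hα0 hS, hα, zero_add]
      apply v_sum hv _ _ _ hS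
      intro x hx hx0
      have hxi : x.1 + x.2 = i := Finset.HasAntidiagonal.mem_antidiagonal.1 hx
      have hν0 : ν.coeff x.1 ≠ 0 := left_ne_zero_of_mul hx0
      have hf0 : (F n).coeff x.2 ≠ 0 := right_ne_zero_of_mul hx0
      have hx2q : x.2 < q := by
        by_contra hcon
        push_neg at hcon
        exact hf0 (hFdeg x.2 hcon)
      rw [hv.1 _ _ hν0 hf0]
      by_cases hb : x.2 = q - 1
      · have hx1N : x.1 < N := by omega
        have h1 := hνmid x.1 (by omega) hν0
        have h2 := ih1 x.2 hf0
        linarith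
      · have hx2' : x.2 < q - 1 := by omega
        have h1 := hνint x.1 hν0
        have h2 := ih4 x.2 hx2' hf0
        linarith
    have hsingle : (ν * F n).coeff (p ^ (n + 1) - 1) = ν.coeff N * (F n).coeff (q - 1) := by
      rw [Polynomial.coeff_mul]
      apply Finset.sum_eq_single_of_mem (N, q - 1)
      · rw [Finset.HasAntidiagonal.mem_antidiagonal]; omega
      · rintro ⟨a, b⟩ hab hne
        rw [Finset.HasAntidiagonal.mem_antidiagonal] at hab
        simp only at hab ⊢
        rcases lt_or_ge b q with hbq | hbq
        · by_cases hb : b = q - 1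
          · exfalso
            apply hne
            have haN : a = N := by omega
            rw [haN, hb]
          · have haN : N < a := by omega
            rw [hνhigh a haN, zero_mul]
        · rw [hFdeg b hbq, mul_zero]
    have hGtopval : (C α * ν * F n).coeff (p ^ (n + 1) - 1) = α * (F n).coeff (q - 1) := by
      rw [mul_assoc, Polynomial.coeff_C_mul, hsingle, hνtop, one_mul]
    have hGtop0 : (C α * ν * F n).coeff (p ^ (n + 1) - 1) ≠ 0 :=
      hGtopval ▸ mul_ne_zero hα0 ih2
    have hGtopv : v ((C α * ν * F n).coeff (p ^ (n + 1) - 1)) = m := by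
      rw [hGtopval, hv.1 _ _ hα0 ih2, hα, ih3, zero_add]
    have htop := v_add_eq hv (x := (C α * ν * F n).coeff (p ^ (n + 1) - 1))
      (y := (F (n + 1) - C α * ν * F n).coeff (p ^ (n + 1) - 1)) hGtop0
      (by
        intro hne
        have h1 := hHv _ hne
        have h2 : ((m : ℤ)) < t := by exact_mod_cast htm
        rw [hGtopv]
        linarith)
    refine ⟨?_, ⟨?_, ?_⟩, ?_⟩
    · intro i hi
      rw [hcoeffdec i] at hi ⊢
      refine vadd' hv (hGa i) (fun h => ?_) hi
      have h1 := hHv i h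
      have h2 : ((m : ℤ)) ≤ t := by exact_mod_cast htm.le
      linarith
    · rw [hcoeffdec]
      exact htop.1
    · rw [hcoeffdec, htop.2, hGtopv]
    · intro i hi hne
      rw [hcoeffdec i] at hne ⊢
      refine vadd' hv (hGc i hi) (fun h => ?_) hne
      have h1 := hHv i h
      have h2 : ((m : ℤ)) + 1 ≤ t := by exact_mod_cast htm
      linarith
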